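/- arXiv:2206.13182 — 3 statements merged into one kernel-verified Lean document; each statement's English description precedes it below -/
import Mathlib

section
/- For every nonnegative integer k, the tree H_k has domination number γ(H_k) = 2k + 2 and exactly 2·5^k + 3^k minimum dominating sets, i.e., Γ(H_k) = 2·5^k + 3^k. -/
/-- A set `D` of vertices is a dominating set if every vertex either lies in `D`
or is adjacent to a vertex of `D`. -/
def IsDominatingSet {V : Type*} (G : SimpleGraph V) (D : Finset V) : Prop :=
  ∀ v : V, v ∈ D ∨ ∃ w ∈ D, G.Adj v w

/-- The domination number: the minimum size of a dominating set. -/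
noncomputable def dominationNumber {V : Type*} [Fintype V] (G : SimpleGraph V) : ℕ :=
  sInf {n | ∃ D : Finset V, IsDominatingSet G D ∧ D.card = n}

/-- The number of minimum dominating sets. -/
noncomputable def numMinDomSets {V : Type*} [Fintype V] (G : SimpleGraph V) : ℕ :=
  Set.ncard {D : Finset V | IsDominatingSet G D ∧ D.card = dominationNumber G}

/-- The tree `G_k`: vertices `r = inl 0`, `s = inl 1`, and for each `i : Fin k` a path
`y_i x_i w_i v_i u_i = inr (i, 0), …, inr (i, 4)`; edges `r s`, `s y_i`, and the path edges. -/
def Gk (k : ℕ) : SimpleGraph (Fin 2 ⊕ (Fin k × Fin 5)) :=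
  SimpleGraph.fromRel (fun a b =>
    (a = Sum.inl 0 ∧ b = Sum.inl 1) ∨
    (∃ i : Fin k, a = Sum.inl 1 ∧ b = Sum.inr (i, 0)) ∨
    (∃ (i : Fin k) (j : Fin 4), a = Sum.inr (i, j.castSucc) ∧ b = Sum.inr (i, j.succ)))

/-- The tree `H_k`: obtained from `G_k` by appending a path `u v w` (here `inr 0, inr 1, inr 2`)
to the vertex `s = inl (inl 1)`, via edges `u v`, `v w`, `w s`. -/
def Hk (k : ℕ) : SimpleGraph ((Fin 2 ⊕ (Fin k × Fin 5)) ⊕ Fin 3) :=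
  SimpleGraph.fromRel (fun a b =>
    (∃ x y, (Gk k).Adj x y ∧ a = Sum.inl x ∧ b = Sum.inl y) ∨
    (a = Sum.inr 0 ∧ b = Sum.inr 1) ∨
    (a = Sum.inr 1 ∧ b = Sum.inr 2) ∨
    (a = Sum.inr 2 ∧ b = Sum.inl (Sum.inl 1)))

/-!
Read `H_k` as the path `r s w v u` with `k` copies of the path `y x w v u` hung from `s` by
their end `y`. A dominating set then splits into `k + 1` slices, one subset of `Fin 5` per path.
Each slice has at least two vertices, since it must dominate the last vertex of its path and
(vertex `1` of a leg, vertex `0` of the core) another vertex whose closed neighbourhood is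
disjoint from that of the last one; so `γ(H_k) = 2k + 2`, and a minimum dominating set has
exactly two vertices in every slice. The core slice is then `{s, v}`, `{s, u}` or `{r, v}`, and
each leg slice is one of the five pairs dominating `x w v u`; when `s` is not chosen, `y` must be
dominated inside its leg, which leaves three of them. Hence `Γ(H_k) = 2·5^k + 3^k`.
-/

open Finset SimpleGraph

def Dominates {V : Type*} (G : SimpleGraph V) (D : Finset V) (v : V) : Prop :=
  v ∈ D ∨ ∃ w ∈ D, G.Adj v w

instance {V : Type*} [DecidableEq V] (G : SimpleGraph V) [DecidableRel G.Adj] (D : Finset V)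
    (v : V) : Decidable (Dominates G D v) :=
  inferInstanceAs (Decidable (_ ∨ _))

instance (n : ℕ) : DecidableRel (pathGraph n).Adj := fun _ _ => decidable_of_iff' _ pathGraph_adj

lemma dominationNumber_eq {V : Type*} [Fintype V] {G : SimpleGraph V} {D : Finset V} {n : ℕ}
    (hD : IsDominatingSet G D) (hcard : #D = n) (hmin : ∀ D', IsDominatingSet G D' → n ≤ #D') :
    dominationNumber G = n :=
  le_antisymm (Nat.sInf_le ⟨D, hD, hcard⟩)
    (le_csInf ⟨_, D, hD, hcard⟩ fun _ ⟨D', hD', h⟩ => h ▸ hmin D' hD')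

section Isomorphism

variable {V W : Type*} {G : SimpleGraph V} {G' : SimpleGraph W}

lemma isDominatingSet_finsetCongr_iff (e : G ≃g G') (D : Finset V) :
    IsDominatingSet G' (e.toEquiv.finsetCongr D) ↔ IsDominatingSet G D := by
  refine (e.toEquiv.forall_congr fun v => ?_).symm
  simp only [Equiv.finsetCongr_apply, mem_map, Equiv.coe_toEmbedding, RelIso.coe_fn_toEquiv,
    exists_exists_and_eq_and, EmbeddingLike.apply_eq_iff_eq, exists_eq_right, Iso.map_adj_iff]

lemma isDominatingSet_iff_finsetCongr_symm (e : G ≃g G') (D' : Finset W) :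
    IsDominatingSet G' D' ↔ IsDominatingSet G (e.toEquiv.finsetCongr.symm D') := by
  rw [← isDominatingSet_finsetCongr_iff e, Equiv.apply_symm_apply]

variable [Fintype V] [Fintype W]

lemma dominationNumber_congr (e : G ≃g G') : dominationNumber G = dominationNumber G' := by
  unfold dominationNumber
  congr 1
  ext n
  constructor
  · rintro ⟨D, hD, rfl⟩
    exact ⟨e.toEquiv.finsetCongr D, (isDominatingSet_finsetCongr_iff e D).2 hD, by simp⟩
  · rintro ⟨D', hD', rfl⟩
    exact ⟨e.toEquiv.finsetCongr.symm D', (isDominatingSet_iff_finsetCongr_symm e D').1 hD', by simp⟩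

lemma numMinDomSets_congr (e : G ≃g G') : numMinDomSets G = numMinDomSets G' := by
  rw [numMinDomSets, numMinDomSets, ← dominationNumber_congr e,
    ← Set.ncard_image_of_injective _ e.toEquiv.finsetCongr.injective, Equiv.image_eq_preimage_symm]
  congr 1
  ext D'
  simp [isDominatingSet_iff_finsetCongr_symm e]

end Isomorphism

section Slices

variable {α β : Type*} [Fintype α] [DecidableEq α] [Fintype β] [DecidableEq β]

def finsetProdEquivPi : Finset (α × β) ≃ (α → Finset β) where
  toFun D a := {b | (a, b) ∈ D}
  invFun S := {p | p.2 ∈ S p.1}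
  left_inv D := by ext; simp
  right_inv S := by ext; simp

@[simp]
lemma mem_finsetProdEquivPi {D : Finset (α × β)} {a : α} {b : β} :
    b ∈ finsetProdEquivPi D a ↔ (a, b) ∈ D := by
  simp [finsetProdEquivPi]

lemma card_eq_sum_card_finsetProdEquivPi (D : Finset (α × β)) :
    #D = ∑ a, #(finsetProdEquivPi D a) := by
  rw [← card_sigma, ← card_map (Equiv.sigmaEquivProd α β).toEmbedding]
  congr 1
  ext ⟨a, b⟩
  simp

end Slices

lemma card_filter_option_pi {ι β : Type*} [Fintype ι] [DecidableEq ι] [Fintype β] [DecidableEq β]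
    (C : Finset β) (B : β → Finset β) :
    #{S : Option ι → β | S none ∈ C ∧ ∀ i, S (some i) ∈ B (S none)} =
      ∑ c ∈ C, #(B c) ^ Fintype.card ι := by
  simp_rw [← card_univ (α := ι), ← prod_const, ← Fintype.card_piFinset, ← card_sigma]
  refine card_nbij' (fun S => ⟨S none, fun i => S (some i)⟩) (fun p a => a.elim p.1 p.2)
    ?_ ?_ ?_ ?_
  · intro S
    simp
  · rintro ⟨c, b⟩
    simp
  · intro S _
    ext (_ | i) <;> rfl
  · rintro ⟨c, b⟩ _
    rfl

lemma sum_const_two_option {ι : Type*} [Fintype ι] :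
    ∑ _a : Option ι, 2 = 2 * Fintype.card ι + 2 := by
  simp
  ring

lemma two_le_card_of_dominates_pathGraph (s : Finset (Fin 5)) {j : Fin 5} (hj : j ≤ 1)
    (h : Dominates (pathGraph 5) s j) (h₄ : Dominates (pathGraph 5) s 4) : 2 ≤ #s := by
  revert s j
  decide

def minCoreSlices : Finset (Finset (Fin 5)) :=
  {c | #c = 2 ∧ ∀ j ≠ 1, Dominates (pathGraph 5) c j}

def minLegSlices (c : Finset (Fin 5)) : Finset (Finset (Fin 5)) :=
  {b | #b = 2 ∧ ∀ j, Dominates (pathGraph 5) b j ∨ (j = 0 ∧ 1 ∈ c)}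

lemma minCoreSlices_eq : minCoreSlices = {{1, 3}, {1, 4}, {0, 3}} := by
  decide

lemma dominates_one_of_mem_minCoreSlices :
    ∀ c ∈ minCoreSlices, Dominates (pathGraph 5) c 1 := by
  rw [minCoreSlices_eq]
  decide

lemma card_minLegSlices_one_three : #(minLegSlices {1, 3}) = 5 := by
  decide

lemma card_minLegSlices_one_four : #(minLegSlices {1, 4}) = 5 := by
  decide

lemma card_minLegSlices_zero_three : #(minLegSlices {0, 3}) = 3 := by
  decide

-- `(none, ·)` is the core path `r s w v u`, `(some i, ·)` the leg `y_i x_i w_i v_i u_i`.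
def pendantPaths (ι : Type*) : SimpleGraph (Option ι × Fin 5) where
  Adj p q := (p.1 = q.1 ∧ (pathGraph 5).Adj p.2 q.2) ∨
    (p.1 = none ∧ q.1.isSome ∧ p.2 = 1 ∧ q.2 = 0) ∨ (q.1 = none ∧ p.1.isSome ∧ q.2 = 1 ∧ p.2 = 0)
  symm := ⟨fun p q => by
    rintro (⟨h, h'⟩ | h | h)
    exacts [.inl ⟨h.symm, h'.symm⟩, .inr (.inr h), .inr (.inl h)]⟩
  loopless := ⟨fun p => by rintro (⟨-, h⟩ | ⟨h, h', -⟩ | ⟨h, h', -⟩) <;> simp_all⟩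

section PendantPaths

variable {ι : Type*} [Fintype ι] [DecidableEq ι]

lemma isDominatingSet_pendantPaths_iff (D : Finset (Option ι × Fin 5)) :
    IsDominatingSet (pendantPaths ι) D ↔
      (∀ j, Dominates (pathGraph 5) (finsetProdEquivPi D none) j ∨
        (j = 1 ∧ ∃ i, 0 ∈ finsetProdEquivPi D (some i))) ∧
      ∀ i j, Dominates (pathGraph 5) (finsetProdEquivPi D (some i)) j ∨
        (j = 0 ∧ 1 ∈ finsetProdEquivPi D none) := by
  simp only [IsDominatingSet, Prod.forall, Option.forall]
  simp [Dominates, pendantPaths, Option.exists, and_or_left, exists_or, or_assoc, and_comm]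

lemma two_le_card_finsetProdEquivPi {D : Finset (Option ι × Fin 5)}
    (hD : IsDominatingSet (pendantPaths ι) D) (a : Option ι) : 2 ≤ #(finsetProdEquivPi D a) := by
  obtain ⟨hcore, hlegs⟩ := (isDominatingSet_pendantPaths_iff D).1 hD
  cases a with
  | none =>
    exact two_le_card_of_dominates_pathGraph _ (j := 0) (by decide)
      ((hcore 0).resolve_right (by simp)) ((hcore 4).resolve_right (by simp))
  | some i =>
    exact two_le_card_of_dominates_pathGraph _ (j := 1) le_rfl
      ((hlegs i 1).resolve_right (by simp)) ((hlegs i 4).resolve_right (by simp))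

lemma card_le_of_isDominatingSet_pendantPaths {D : Finset (Option ι × Fin 5)}
    (hD : IsDominatingSet (pendantPaths ι) D) : 2 * Fintype.card ι + 2 ≤ #D := by
  rw [← sum_const_two_option, card_eq_sum_card_finsetProdEquivPi]
  exact sum_le_sum fun a _ => two_le_card_finsetProdEquivPi hD a

lemma card_finsetProdEquivPi_eq_two {D : Finset (Option ι × Fin 5)}
    (hD : IsDominatingSet (pendantPaths ι) D) (hcard : #D = 2 * Fintype.card ι + 2)
    (a : Option ι) : #(finsetProdEquivPi D a) = 2 := by
  rw [← sum_const_two_option, card_eq_sum_card_finsetProdEquivPi, eq_comm,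
    sum_eq_sum_iff_of_le fun a _ => two_le_card_finsetProdEquivPi hD a] at hcard
  exact (hcard a (mem_univ a)).symm

lemma isDominatingSet_pendantPaths_and_card_eq_iff (D : Finset (Option ι × Fin 5)) :
    IsDominatingSet (pendantPaths ι) D ∧ #D = 2 * Fintype.card ι + 2 ↔
      finsetProdEquivPi D none ∈ minCoreSlices ∧
        ∀ i, finsetProdEquivPi D (some i) ∈ minLegSlices (finsetProdEquivPi D none) := by
  constructor
  · rintro ⟨hD, hcard⟩
    have hcard₂ := card_finsetProdEquivPi_eq_two hD hcard
    obtain ⟨hcore, hlegs⟩ := (isDominatingSet_pendantPaths_iff D).1 hD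
    simp only [minCoreSlices, minLegSlices, mem_filter, mem_univ, true_and]
    exact ⟨⟨hcard₂ none, fun j hj => (hcore j).resolve_right (hj ·.1)⟩,
      fun i => ⟨hcard₂ (some i), hlegs i⟩⟩
  · rintro ⟨hcore, hlegs⟩
    have hcore₁ := dominates_one_of_mem_minCoreSlices _ hcore
    simp only [minCoreSlices, minLegSlices, mem_filter, mem_univ, true_and] at hcore hlegs
    refine ⟨(isDominatingSet_pendantPaths_iff D).2 ⟨fun j => .inl ?_, fun i => (hlegs i).2⟩, ?_⟩
    · obtain rfl | hj := eq_or_ne j 1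
      exacts [hcore₁, hcore.2 j hj]
    · rw [← sum_const_two_option, card_eq_sum_card_finsetProdEquivPi]
      exact sum_congr rfl fun a _ => a.rec hcore.1 fun i => (hlegs i).1

lemma dominationNumber_pendantPaths :
    dominationNumber (pendantPaths ι) = 2 * Fintype.card ι + 2 := by
  obtain ⟨hD, hcard⟩ := (isDominatingSet_pendantPaths_and_card_eq_iff
    (finsetProdEquivPi.symm fun _ : Option ι => {1, 3})).2
    (by simp only [Equiv.apply_symm_apply]; exact ⟨by decide, fun _ => by decide⟩)
  exact dominationNumber_eq hD hcard fun _ => card_le_of_isDominatingSet_pendantPaths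

lemma numMinDomSets_pendantPaths :
    numMinDomSets (pendantPaths ι) = 2 * 5 ^ Fintype.card ι + 3 ^ Fintype.card ι := by
  have hmin : {D | IsDominatingSet (pendantPaths ι) D ∧ #D = 2 * Fintype.card ι + 2} =
      finsetProdEquivPi.symm '' ↑({S | S none ∈ minCoreSlices ∧
        ∀ i, S (some i) ∈ minLegSlices (S none)} : Finset (Option ι → Finset (Fin 5))) := by
    ext D
    simp [Equiv.image_symm_eq_preimage, isDominatingSet_pendantPaths_and_card_eq_iff]
  rw [numMinDomSets, dominationNumber_pendantPaths, hmin,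
    Set.ncard_image_of_injective _ finsetProdEquivPi.symm.injective, Set.ncard_coe_finset,
    card_filter_option_pi, minCoreSlices_eq, sum_insert (by decide), sum_insert (by decide),
    sum_singleton, card_minLegSlices_one_three, card_minLegSlices_one_four,
    card_minLegSlices_zero_three]
  ring

end PendantPaths
section Hk

variable {k : ℕ}

@[simp]
lemma Gk_adj_inl_inl (a b : Fin 2) : (Gk k).Adj (.inl a) (.inl b) ↔ a ≠ b := by
  fin_cases a <;> fin_cases b <;> simp [Gk]

@[simp]
lemma Gk_adj_inl_inr (a : Fin 2) (i : Fin k) (j : Fin 5) :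
    (Gk k).Adj (.inl a) (.inr (i, j)) ↔ a = 1 ∧ j = 0 := by
  simp [Gk, eq_comm]

@[simp]
lemma Gk_adj_inr_inl (a : Fin 2) (i : Fin k) (j : Fin 5) :
    (Gk k).Adj (.inr (i, j)) (.inl a) ↔ a = 1 ∧ j = 0 := by
  rw [SimpleGraph.adj_comm, Gk_adj_inl_inr]

@[simp]
lemma Gk_adj_inr_inr (i i' : Fin k) (j j' : Fin 5) :
    (Gk k).Adj (.inr (i, j)) (.inr (i', j')) ↔ i = i' ∧ (pathGraph 5).Adj j j' := by
  simp only [Gk, SimpleGraph.fromRel_adj, ne_eq, Sum.inr.injEq, Prod.mk.injEq, reduceCtorEq,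
    false_and, false_or, exists_false, pathGraph_adj]
  constructor
  · rintro ⟨-, ⟨_, j₀, ⟨rfl, rfl⟩, rfl, rfl⟩ | ⟨_, j₀, ⟨rfl, rfl⟩, rfl, rfl⟩⟩
    exacts [⟨rfl, .inl (by simp)⟩, ⟨rfl, .inr (by simp)⟩]
  · rintro ⟨rfl, h | h⟩
    · exact ⟨by omega, .inl ⟨i, ⟨j, by omega⟩, ⟨rfl, rfl⟩, rfl, Fin.ext h.symm⟩⟩
    · exact ⟨by omega, .inr ⟨i, ⟨j', by omega⟩, ⟨rfl, rfl⟩, rfl, Fin.ext h.symm⟩⟩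

@[simp]
lemma Hk_adj_inl_inl (x y : Fin 2 ⊕ (Fin k × Fin 5)) :
    (Hk k).Adj (.inl x) (.inl y) ↔ (Gk k).Adj x y := by
  simp only [Hk, SimpleGraph.fromRel_adj, ne_eq, Sum.inl.injEq, reduceCtorEq, false_and, or_false]
  constructor
  · rintro ⟨-, ⟨x', y', h, rfl, rfl⟩ | ⟨x', y', h, rfl, rfl⟩⟩
    exacts [h, h.symm]
  · exact fun h => ⟨h.ne, .inl ⟨x, y, h, rfl, rfl⟩⟩

@[simp]
lemma Hk_adj_inl_inr (x : Fin 2 ⊕ (Fin k × Fin 5)) (b : Fin 3) :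
    (Hk k).Adj (.inl x) (.inr b) ↔ x = .inl 1 ∧ b = 2 := by
  simp [Hk, and_comm]

@[simp]
lemma Hk_adj_inr_inl (x : Fin 2 ⊕ (Fin k × Fin 5)) (b : Fin 3) :
    (Hk k).Adj (.inr b) (.inl x) ↔ x = .inl 1 ∧ b = 2 := by
  rw [SimpleGraph.adj_comm, Hk_adj_inl_inr]

@[simp]
lemma Hk_adj_inr_inr (a b : Fin 3) : (Hk k).Adj (.inr a) (.inr b) ↔ (pathGraph 3).Adj a b := by
  fin_cases a <;> fin_cases b <;> simp [Hk, pathGraph_adj]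

end Hk

def hkVertex (k : ℕ) : Option (Fin k) × Fin 5 ≃ (Fin 2 ⊕ (Fin k × Fin 5)) ⊕ Fin 3 where
  toFun
    | (none, j) => ![.inl (.inl 0), .inl (.inl 1), .inr 2, .inr 1, .inr 0] j
    | (some i, j) => .inl (.inr (i, j))
  invFun
    | .inl (.inl a) => (none, a.castLE (by omega))
    | .inl (.inr (i, j)) => (some i, j)
    | .inr b => (none, ![4, 3, 2] b)
  left_inv := by
    rintro ⟨_ | i, j⟩
    · fin_cases j <;> rfl
    · rfl
  right_inv := by
    rintro ((a | ⟨i, j⟩) | b)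
    · fin_cases a <;> rfl
    · rfl
    · fin_cases b <;> rfl

def pendantPathsIsoHk (k : ℕ) : pendantPaths (Fin k) ≃g Hk k where
  toEquiv := hkVertex k
  map_rel_iff' := by
    rintro ⟨_ | i, j⟩ ⟨_ | i', j'⟩
    · fin_cases j <;> fin_cases j' <;> simp [hkVertex, pendantPaths, pathGraph_adj]
    · fin_cases j <;> simp [hkVertex, pendantPaths]
    · fin_cases j' <;> simp [hkVertex, pendantPaths]
    · simp [hkVertex, pendantPaths]

/-- `H_k` has domination number `2k + 2` and exactly `2·5^k + 3^k` minimum dominating sets. -/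
theorem Hk_dominationNumber_and_numMinDomSets (k : ℕ) :
    dominationNumber (Hk k) = 2 * k + 2 ∧ numMinDomSets (Hk k) = 2 * 5 ^ k + 3 ^ k := by
  rw [← dominationNumber_congr (pendantPathsIsoHk k), ← numMinDomSets_congr (pendantPathsIsoHk k),
    dominationNumber_pendantPaths, numMinDomSets_pendantPaths, Fintype.card_fin]
  exact ⟨rfl, rfl⟩
end

section
/- For all positive integers k, l, m, the tree G(k, l, m) has exactly k·((m+1)^l − m^l)^k minimum total dominating sets, i.e., Γ_t(G(k,l,m)) = k((m+1)^l − m^l)^k. -/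
/-- A set `D` of vertices is a total dominating set if every vertex has a neighbour in `D`. -/
def IsTotalDominatingSet {V : Type*} (G : SimpleGraph V) (D : Finset V) : Prop :=
  ∀ v : V, ∃ w ∈ D, G.Adj v w

/-- The total domination number: the minimum size of a total dominating set. -/
noncomputable def totalDominationNumber {V : Type*} [Fintype V] (G : SimpleGraph V) : ℕ :=
  sInf {n | ∃ D : Finset V, IsTotalDominatingSet G D ∧ D.card = n}

/-- The number of minimum total dominating sets. -/
noncomputable def numMinTotalDomSets {V : Type*} [Fintype V] (G : SimpleGraph V) : ℕ :=
  Set.ncard {D : Finset V | IsTotalDominatingSet G D ∧ D.card = totalDominationNumber G}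

/-- The tree `G(k,l,m)`: root `y`, children `x_a` (`a : Fin k`), grandchildren `w_{a,b}`
(`b : Fin l`), each `w_{a,b}` with a single child `v_{a,b}`, each `v_{a,b}` with `m` leaves
`u_{a,b,c}` (`c : Fin m`). -/
def Gklm (k l m : ℕ) :
    SimpleGraph (Unit ⊕ (Fin k ⊕ ((Fin k × Fin l) ⊕ ((Fin k × Fin l) ⊕ (Fin k × Fin l × Fin m))))) :=
  SimpleGraph.fromRel (fun p q =>
    (∃ a : Fin k, p = Sum.inl () ∧ q = Sum.inr (Sum.inl a)) ∨
    (∃ (a : Fin k) (b : Fin l),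
      p = Sum.inr (Sum.inl a) ∧ q = Sum.inr (Sum.inr (Sum.inl (a, b)))) ∨
    (∃ (a : Fin k) (b : Fin l),
      p = Sum.inr (Sum.inr (Sum.inl (a, b))) ∧
      q = Sum.inr (Sum.inr (Sum.inr (Sum.inl (a, b))))) ∨
    (∃ (a : Fin k) (b : Fin l) (c : Fin m),
      p = Sum.inr (Sum.inr (Sum.inr (Sum.inl (a, b)))) ∧
      q = Sum.inr (Sum.inr (Sum.inr (Sum.inr (a, b, c))))))

/-!
Every total dominating set of `G(k,l,m)` contains all support vertices `v_{a,b}` (to dominate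
the leaves), a neighbour of each `v_{a,b}`, and some `x_{a₀}` (to dominate `y`). These `2kl + 1`
vertices are distinct, so `γ_t = 2kl + 1`, and a minimum total dominating set consists of
exactly them. It is thus determined by `a₀` and by the choice, for each `(a, b)`, of `w_{a,b}` or
one of the `m` leaves `u_{a,b,c}`; since `y` is not in it, it dominates every `x_a` iff in each
row `a` some `w_{a,b}` is chosen. This leaves `k · ((m+1)^l − m^l)^k` choices.
-/

theorem totalDominationNumber_eq_of_forall_le {V : Type*} [Fintype V] {G : SimpleGraph V}
    {n : ℕ} (hle : ∀ D, IsTotalDominatingSet G D → n ≤ D.card)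
    (hex : ∃ D, IsTotalDominatingSet G D ∧ D.card = n) :
    totalDominationNumber G = n :=
  le_antisymm (Nat.sInf_le hex) (le_csInf ⟨n, hex⟩ fun _ ⟨D, hD, hcard⟩ => hcard ▸ hle D hD)

theorem Nat.card_exists_eq_none (ι α : Type*) [Finite ι] [Finite α] :
    Nat.card {f : ι → Option α // ∃ i, f i = none} =
      (Nat.card α + 1) ^ Nat.card ι - Nat.card α ^ Nat.card ι := by
  classical
  have hsome : Nat.card {f : ι → Option α // ¬∃ i, f i = none} = Nat.card α ^ Nat.card ι := by
    rw [Nat.card_congr ((Equiv.subtypeEquivRight fun f => by simp [Option.ne_none_iff_isSome]).trans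
      ((Equiv.subtypePiEquivPi (β := fun _ => Option α) (p := fun _ o => o.isSome)).trans
        (Equiv.piCongrRight fun _ => Equiv.optionIsSomeEquiv α))), Nat.card_fun]
  have hsplit := Nat.card_congr (Equiv.sumCompl fun f : ι → Option α => ∃ i, f i = none)
  rw [Nat.card_sum, Nat.card_fun, Finite.card_option, hsome] at hsplit
  omega

theorem Nat.card_forall_exists_eq_none (κ ι α : Type*) [Finite κ] [Finite ι] [Finite α] :
    Nat.card {g : κ → ι → Option α // ∀ a, ∃ i, g a i = none} =
      ((Nat.card α + 1) ^ Nat.card ι - Nat.card α ^ Nat.card ι) ^ Nat.card κ := by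
  rw [Nat.card_congr
      (Equiv.subtypePiEquivPi (β := fun _ => ι → Option α) (p := fun _ f => ∃ i, f i = none)),
    Nat.card_fun, Nat.card_exists_eq_none]

namespace Gklm

variable {k l m : ℕ}

abbrev Vertex (k l m : ℕ) :=
  Unit ⊕ (Fin k ⊕ ((Fin k × Fin l) ⊕ ((Fin k × Fin l) ⊕ (Fin k × Fin l × Fin m))))

def y : Vertex k l m := Sum.inl ()
def x (a : Fin k) : Vertex k l m := Sum.inr (Sum.inl a)
def w (a : Fin k) (b : Fin l) : Vertex k l m := Sum.inr (Sum.inr (Sum.inl (a, b)))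
def v (a : Fin k) (b : Fin l) : Vertex k l m := Sum.inr (Sum.inr (Sum.inr (Sum.inl (a, b))))
def u (a : Fin k) (b : Fin l) (c : Fin m) : Vertex k l m :=
  Sum.inr (Sum.inr (Sum.inr (Sum.inr (a, b, c))))

def vNeighbor (a : Fin k) (b : Fin l) : Option (Fin m) → Vertex k l m
  | none => w a b
  | some c => u a b c

theorem adj_y (q : Vertex k l m) : (Gklm k l m).Adj y q ↔ ∃ a, q = x a := by
  simp only [Gklm, SimpleGraph.fromRel_adj, y, x]; aesop

theorem adj_x (a : Fin k) (q : Vertex k l m) :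
    (Gklm k l m).Adj (x a) q ↔ q = y ∨ ∃ b, q = w a b := by
  simp only [Gklm, SimpleGraph.fromRel_adj, y, x, w]; aesop

theorem adj_w (a : Fin k) (b : Fin l) (q : Vertex k l m) :
    (Gklm k l m).Adj (w a b) q ↔ q = x a ∨ q = v a b := by
  simp only [Gklm, SimpleGraph.fromRel_adj, x, w, v]; aesop

theorem adj_v (a : Fin k) (b : Fin l) (q : Vertex k l m) :
    (Gklm k l m).Adj (v a b) q ↔ ∃ o, q = vNeighbor a b o := by
  simp only [Gklm, SimpleGraph.fromRel_adj, Option.exists, vNeighbor, w, v, u]; aesop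

theorem adj_u (a : Fin k) (b : Fin l) (c : Fin m) (q : Vertex k l m) :
    (Gklm k l m).Adj (u a b c) q ↔ q = v a b := by
  simp only [Gklm, SimpleGraph.fromRel_adj, v, u]; aesop

theorem isTotalDominatingSet_iff {D : Finset (Vertex k l m)} :
    IsTotalDominatingSet (Gklm k l m) D ↔
      (∃ a, x a ∈ D) ∧
      (∀ a, y ∈ D ∨ ∃ b, w a b ∈ D) ∧
      (∀ a b, x a ∈ D ∨ v a b ∈ D) ∧
      (∀ a b, ∃ o, vNeighbor a b o ∈ D) ∧
      (∀ a b, Fin m → v a b ∈ D) := by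
  have hy : (∃ q ∈ D, (Gklm k l m).Adj y q) ↔ ∃ a, x a ∈ D := by
    simp [adj_y, -Sum.exists]
  have hx a : (∃ q ∈ D, (Gklm k l m).Adj (x a) q) ↔ y ∈ D ∨ ∃ b, w a b ∈ D := by
    simp [adj_x, -Sum.exists, and_or_left, exists_or]
  have hw a b : (∃ q ∈ D, (Gklm k l m).Adj (w a b) q) ↔ x a ∈ D ∨ v a b ∈ D := by
    simp [adj_w, -Sum.exists, and_or_left, exists_or]
  have hv a b : (∃ q ∈ D, (Gklm k l m).Adj (v a b) q) ↔ ∃ o, vNeighbor a b o ∈ D := by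
    simp [adj_v, -Sum.exists]
  have hu a b c : (∃ q ∈ D, (Gklm k l m).Adj (u a b c) q) ↔ v a b ∈ D := by
    simp [adj_u, -Sum.exists]
  simp only [IsTotalDominatingSet, Sum.forall, Unique.forall_iff, Prod.forall]
  exact and_congr hy <| and_congr (forall_congr' hx) <| and_congr
    (forall_congr' fun a => forall_congr' (hw a)) <| and_congr
    (forall_congr' fun a => forall_congr' (hv a))
    (forall_congr' fun a => forall_congr' fun b => forall_congr' (hu a b))

theorem vNeighbor_inj {a a' : Fin k} {b b' : Fin l} {o o' : Option (Fin m)} :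
    vNeighbor a b o = vNeighbor a' b' o' ↔ a = a' ∧ b = b' ∧ o = o' := by
  cases o <;> cases o' <;> simp [vNeighbor, w, u]

theorem vNeighbor_ne_x (a : Fin k) (b : Fin l) (o : Option (Fin m)) (a' : Fin k) :
    vNeighbor a b o ≠ x a' := by
  cases o <;> simp [vNeighbor, w, u, x]

theorem vNeighbor_ne_v (a : Fin k) (b : Fin l) (o : Option (Fin m)) (a' : Fin k) (b' : Fin l) :
    vNeighbor a b o ≠ v a' b' := by
  cases o <;> simp [vNeighbor, w, u, v]

theorem vNeighbor_ne_y (a : Fin k) (b : Fin l) (o : Option (Fin m)) :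
    vNeighbor a b o ≠ y := by
  cases o <;> simp [vNeighbor, w, u, y]

def minTDS (a₀ : Fin k) (g : Fin k → Fin l → Option (Fin m)) : Finset (Vertex k l m) :=
  insert (x a₀) (Finset.univ.image (fun p : Fin k × Fin l => v p.1 p.2) ∪
    Finset.univ.image fun p : Fin k × Fin l => vNeighbor p.1 p.2 (g p.1 p.2))

theorem mem_minTDS {a₀ : Fin k} {g : Fin k → Fin l → Option (Fin m)} {q : Vertex k l m} :
    q ∈ minTDS a₀ g ↔ q = x a₀ ∨ (∃ a b, v a b = q) ∨ ∃ a b, vNeighbor a b (g a b) = q := by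
  simp [minTDS]

theorem card_minTDS (a₀ : Fin k) (g : Fin k → Fin l → Option (Fin m)) :
    (minTDS a₀ g).card = 2 * (k * l) + 1 := by
  have hv : Function.Injective fun p : Fin k × Fin l => (v p.1 p.2 : Vertex k l m) := by
    intro p q h; simpa [v, Prod.ext_iff] using h
  have hg : Function.Injective fun p : Fin k × Fin l => vNeighbor p.1 p.2 (g p.1 p.2) := by
    intro p q h
    obtain ⟨ha, hb, -⟩ := vNeighbor_inj.1 h
    exact Prod.ext ha hb
  have hdisj : Disjoint (Finset.univ.image fun p : Fin k × Fin l => (v p.1 p.2 : Vertex k l m))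
      (Finset.univ.image fun p : Fin k × Fin l => vNeighbor p.1 p.2 (g p.1 p.2)) := by
    simp only [Finset.disjoint_left, Finset.mem_image]
    rintro _ ⟨p, -, rfl⟩ ⟨q, -, h⟩
    exact vNeighbor_ne_v _ _ _ _ _ h
  have hx : x a₀ ∉ Finset.univ.image (fun p : Fin k × Fin l => v p.1 p.2) ∪
      Finset.univ.image fun p : Fin k × Fin l => vNeighbor p.1 p.2 (g p.1 p.2) := by
    simp only [Finset.mem_union, Finset.mem_image, not_or, not_exists, not_and]
    exact ⟨fun _ _ => by simp [v, x], fun p _ => vNeighbor_ne_x _ _ _ _⟩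
  rw [minTDS, Finset.card_insert_of_notMem hx, Finset.card_union_of_disjoint hdisj,
    Finset.card_image_of_injective _ hv, Finset.card_image_of_injective _ hg]
  simp [two_mul]

theorem exists_minTDS_subset (hm : 0 < m) {D : Finset (Vertex k l m)}
    (hD : IsTotalDominatingSet (Gklm k l m) D) : ∃ a₀ g, minTDS a₀ g ⊆ D := by
  obtain ⟨⟨a₀, ha₀⟩, -, -, hN, hv⟩ := isTotalDominatingSet_iff.1 hD
  choose g hg using hN
  refine ⟨a₀, g, fun q hq => ?_⟩
  rcases mem_minTDS.1 hq with rfl | ⟨a, b, rfl⟩ | ⟨a, b, rfl⟩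
  · exact ha₀
  · exact hv a b ⟨0, hm⟩
  · exact hg a b

theorem isTotalDominatingSet_minTDS_iff {a₀ : Fin k} {g : Fin k → Fin l → Option (Fin m)} :
    IsTotalDominatingSet (Gklm k l m) (minTDS a₀ g) ↔ ∀ a, ∃ b, g a b = none := by
  have hv a b : v a b ∈ minTDS a₀ g := mem_minTDS.2 (Or.inr (Or.inl ⟨a, b, rfl⟩))
  have hN a b : vNeighbor a b (g a b) ∈ minTDS a₀ g := mem_minTDS.2 (Or.inr (Or.inr ⟨a, b, rfl⟩))
  rw [isTotalDominatingSet_iff]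
  constructor
  · rintro ⟨-, hyw, -⟩ a
    have hy : y ∉ minTDS a₀ g := by
      simp only [mem_minTDS, not_or, not_exists]
      exact ⟨by simp [x, y], fun _ _ => by simp [v, y], fun a b => vNeighbor_ne_y a b _⟩
    obtain ⟨b, hb⟩ := (hyw a).resolve_left hy
    rcases mem_minTDS.1 hb with h | ⟨a', b', h⟩ | ⟨a', b', h⟩
    · simp [w, x] at h
    · simp [w, v] at h
    · obtain ⟨rfl, rfl, hnone⟩ :=
        vNeighbor_inj.1 (h.trans (show w a b = vNeighbor a b none from rfl))
      exact ⟨_, hnone⟩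
  · intro hg
    refine ⟨⟨a₀, mem_minTDS.2 (Or.inl rfl)⟩, fun a => ?_, fun a b => Or.inr (hv a b),
      fun a b => ⟨g a b, hN a b⟩, fun a b _ => hv a b⟩
    obtain ⟨b, hb⟩ := hg a
    exact Or.inr ⟨b, by simpa [hb, vNeighbor] using hN a b⟩

theorem minTDS_injective :
    Function.Injective fun t : Fin k × (Fin k → Fin l → Option (Fin m)) => minTDS t.1 t.2 := by
  rintro ⟨a₀, g⟩ ⟨a₀', g'⟩ h
  dsimp only at h
  have hx : a₀ = a₀' := by
    rcases mem_minTDS.1 (h ▸ mem_minTDS.2 (Or.inl rfl) : x a₀ ∈ minTDS a₀' g') with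
      h | ⟨_, _, h⟩ | ⟨_, _, h⟩
    · simpa [x] using h
    · simp [v, x] at h
    · exact absurd h (vNeighbor_ne_x _ _ _ _)
  have hg : g = g' := by
    funext a b
    rcases mem_minTDS.1 (h ▸ mem_minTDS.2 (Or.inr (Or.inr ⟨a, b, rfl⟩)) :
      vNeighbor a b (g a b) ∈ minTDS a₀' g') with h | ⟨_, _, h⟩ | ⟨_, _, h⟩
    · exact absurd h (vNeighbor_ne_x _ _ _ _)
    · exact absurd h.symm (vNeighbor_ne_v _ _ _ _ _)
    · obtain ⟨rfl, rfl, h⟩ := vNeighbor_inj.1 h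
      exact h.symm
  rw [hx, hg]

theorem card_le_of_isTotalDominatingSet (hm : 0 < m) {D : Finset (Vertex k l m)}
    (hD : IsTotalDominatingSet (Gklm k l m) D) : 2 * (k * l) + 1 ≤ D.card := by
  obtain ⟨a₀, g, hsub⟩ := exists_minTDS_subset hm hD
  exact card_minTDS a₀ g ▸ Finset.card_le_card hsub

theorem totalDominationNumber_eq (hk : 0 < k) (hl : 0 < l) (hm : 0 < m) :
    totalDominationNumber (Gklm k l m) = 2 * (k * l) + 1 :=
  totalDominationNumber_eq_of_forall_le (fun _ => card_le_of_isTotalDominatingSet hm)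
    ⟨minTDS ⟨0, hk⟩ fun _ _ => none,
      isTotalDominatingSet_minTDS_iff.2 fun _ => ⟨⟨0, hl⟩, rfl⟩, card_minTDS _ _⟩

theorem setOf_isTotalDominatingSet_card_eq (hm : 0 < m) :
    {D | IsTotalDominatingSet (Gklm k l m) D ∧ D.card = 2 * (k * l) + 1} =
      Set.range fun t : Fin k × {g : Fin k → Fin l → Option (Fin m) // ∀ a, ∃ b, g a b = none} =>
        minTDS t.1 t.2.1 := by
  ext D
  constructor
  · rintro ⟨hD, hcard⟩
    obtain ⟨a₀, g, hsub⟩ := exists_minTDS_subset hm hD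
    obtain rfl := Finset.eq_of_subset_of_card_le hsub (by rw [hcard, card_minTDS])
    exact ⟨(a₀, ⟨g, isTotalDominatingSet_minTDS_iff.1 hD⟩), rfl⟩
  · rintro ⟨⟨a₀, g, hg⟩, rfl⟩
    exact ⟨isTotalDominatingSet_minTDS_iff.2 hg, card_minTDS a₀ g⟩

end Gklm

/-- `G(k,l,m)` has exactly `k·((m+1)^l − m^l)^k` minimum total dominating sets. -/
theorem Gklm_numMinTotalDomSets (k l m : ℕ) (hk : 0 < k) (hl : 0 < l) (hm : 0 < m) :
    numMinTotalDomSets (Gklm k l m) = k * ((m + 1) ^ l - m ^ l) ^ k := by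
  rw [numMinTotalDomSets, Gklm.totalDominationNumber_eq hk hl hm,
    Gklm.setOf_isTotalDominatingSet_card_eq hm]
  refine (Set.ncard_range_of_injective
    (Gklm.minTDS_injective.comp (Function.injective_id.prodMap Subtype.val_injective))).trans ?_
  simp only [Nat.card_prod, Nat.card_forall_exists_eq_none, Nat.card_fin]
end

section
/- Let T_1 and T_2 be finite trees, each with at least two vertices. Let u_1 be a leaf of T_1 whose unique neighbour v_1 is adjacent to at least one leaf of T_1 other than u_1, and let u_2 be a leaf of T_2 whose unique neighbour v_2 is adjacent to at least one leaf of T_2 other than u_2. Let T be the tree obtained from the disjoint union of T_1 and T_2 by adding the edge u_1u_2. Then γ_t(T) = γ_t(T_1) + γ_t(T_2) and Γ_t(T) = Γ_t(T_1)·Γ_t(T_2); moreover, a set D of vertices of T is a total dominating set of T if and only if D ∩ V(T_1) is a total dominating set of T_1 and D ∩ V(T_2) is a total dominating set of T_2. -/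
/-- The tree obtained from the disjoint union of `T₁` and `T₂` by adding the edge
`u₁u₂` between the vertices `u₁` of `T₁` and `u₂` of `T₂`. -/
def joinAtLeaves {V₁ V₂ : Type*} (T₁ : SimpleGraph V₁) (T₂ : SimpleGraph V₂)
    (u₁ : V₁) (u₂ : V₂) : SimpleGraph (V₁ ⊕ V₂) :=
  SimpleGraph.fromRel (fun a b =>
    (∃ x y, T₁.Adj x y ∧ a = Sum.inl x ∧ b = Sum.inl y) ∨
    (∃ x y, T₂.Adj x y ∧ a = Sum.inr x ∧ b = Sum.inr y) ∨
    (a = Sum.inl u₁ ∧ b = Sum.inr u₂))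

/-!
Each `vᵢ` supports a leaf of `Tᵢ` other than `uᵢ`, so `vᵢ` lies in every total dominating set
of `T` and already dominates `uᵢ` inside `Tᵢ`. Hence the bridge `u₁u₂` is never needed: the
total dominating sets of `T` are exactly the disjoint unions of one of `T₁` and one of `T₂`,
which makes `γₜ` additive and the number of minimum ones multiplicative.
-/

section TotalDomination

variable {V : Type*} {G : SimpleGraph V}

theorem IsTotalDominatingSet.mem_of_forall_adj_eq {D : Finset V} (hD : IsTotalDominatingSet G D)
    {u v : V} (hu : ∀ x, G.Adj u x → x = v) : v ∈ D := by
  obtain ⟨w, hw, huw⟩ := hD u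
  exact hu w huw ▸ hw

theorem SimpleGraph.Preconnected.isTotalDominatingSet_univ [Fintype V] [Nontrivial V]
    (hG : G.Preconnected) : IsTotalDominatingSet G Finset.univ := fun v => by
  simpa [SimpleGraph.IsIsolated] using hG.not_isIsolated v

variable [Fintype V]

theorem totalDominationNumber_le_card {D : Finset V} (hD : IsTotalDominatingSet G D) :
    totalDominationNumber G ≤ D.card :=
  Nat.sInf_le ⟨D, hD, rfl⟩

theorem exists_isTotalDominatingSet_card_eq_totalDominationNumber
    (h : ∃ D, IsTotalDominatingSet G D) :
    ∃ D, IsTotalDominatingSet G D ∧ D.card = totalDominationNumber G :=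
  let ⟨D, hD⟩ := h
  Nat.sInf_mem (s := {n | ∃ D, IsTotalDominatingSet G D ∧ D.card = n}) ⟨D.card, D, hD, rfl⟩

end TotalDomination

def TotalDominationSplits {V₁ V₂ : Type*} (G : SimpleGraph (V₁ ⊕ V₂)) (G₁ : SimpleGraph V₁)
    (G₂ : SimpleGraph V₂) : Prop :=
  ∀ D : Finset (V₁ ⊕ V₂),
    IsTotalDominatingSet G D ↔ IsTotalDominatingSet G₁ D.toLeft ∧ IsTotalDominatingSet G₂ D.toRight

namespace TotalDominationSplits

variable {V₁ V₂ : Type*} [Fintype V₁] [Fintype V₂]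
  {G : SimpleGraph (V₁ ⊕ V₂)} {G₁ : SimpleGraph V₁} {G₂ : SimpleGraph V₂}

theorem totalDominationNumber_eq (hG : TotalDominationSplits G G₁ G₂)
    (h₁ : ∃ D, IsTotalDominatingSet G₁ D) (h₂ : ∃ D, IsTotalDominatingSet G₂ D) :
    totalDominationNumber G = totalDominationNumber G₁ + totalDominationNumber G₂ := by
  obtain ⟨D₁, hD₁, hD₁card⟩ := exists_isTotalDominatingSet_card_eq_totalDominationNumber h₁
  obtain ⟨D₂, hD₂, hD₂card⟩ := exists_isTotalDominatingSet_card_eq_totalDominationNumber h₂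
  have hD : IsTotalDominatingSet G (D₁.disjSum D₂) := by simpa [hG _] using ⟨hD₁, hD₂⟩
  obtain ⟨D, hDG, hDcard⟩ := exists_isTotalDominatingSet_card_eq_totalDominationNumber ⟨_, hD⟩
  apply le_antisymm
  · simpa [hD₁card, hD₂card] using totalDominationNumber_le_card hD
  · rw [hG] at hDG
    calc totalDominationNumber G₁ + totalDominationNumber G₂
        ≤ D.toLeft.card + D.toRight.card :=
          add_le_add (totalDominationNumber_le_card hDG.1) (totalDominationNumber_le_card hDG.2)
      _ = totalDominationNumber G := by rw [Finset.card_toLeft_add_card_toRight, hDcard]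

theorem isMinimum_iff (hG : TotalDominationSplits G G₁ G₂)
    (h₁ : ∃ D, IsTotalDominatingSet G₁ D) (h₂ : ∃ D, IsTotalDominatingSet G₂ D)
    (D : Finset (V₁ ⊕ V₂)) :
    IsTotalDominatingSet G D ∧ D.card = totalDominationNumber G ↔
      (IsTotalDominatingSet G₁ D.toLeft ∧ D.toLeft.card = totalDominationNumber G₁) ∧
        (IsTotalDominatingSet G₂ D.toRight ∧ D.toRight.card = totalDominationNumber G₂) := by
  rw [hG, hG.totalDominationNumber_eq h₁ h₂, ← Finset.card_toLeft_add_card_toRight]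
  constructor
  · rintro ⟨⟨hD₁, hD₂⟩, hcard⟩
    have := totalDominationNumber_le_card hD₁
    have := totalDominationNumber_le_card hD₂
    exact ⟨⟨hD₁, by omega⟩, hD₂, by omega⟩
  · rintro ⟨⟨hD₁, hcard₁⟩, hD₂, hcard₂⟩
    exact ⟨⟨hD₁, hD₂⟩, by rw [hcard₁, hcard₂]⟩

theorem numMinTotalDomSets_eq (hG : TotalDominationSplits G G₁ G₂)
    (h₁ : ∃ D, IsTotalDominatingSet G₁ D) (h₂ : ∃ D, IsTotalDominatingSet G₂ D) :
    numMinTotalDomSets G = numMinTotalDomSets G₁ * numMinTotalDomSets G₂ := by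
  have hset : {D | IsTotalDominatingSet G D ∧ D.card = totalDominationNumber G} =
      Finset.sumEquiv ⁻¹'
        ({D | IsTotalDominatingSet G₁ D ∧ D.card = totalDominationNumber G₁} ×ˢ
          {D | IsTotalDominatingSet G₂ D ∧ D.card = totalDominationNumber G₂}) := by
    ext D
    simpa using hG.isMinimum_iff h₁ h₂ D
  rw [numMinTotalDomSets, hset, Set.ncard_preimage_of_injective_subset_range
    Finset.sumEquiv.injective (by simp [Finset.sumEquiv.surjective.range_eq]), Set.ncard_prod]
  rfl

end TotalDominationSplits

section JoinAtLeaves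

variable {V₁ V₂ : Type*} {T₁ : SimpleGraph V₁} {T₂ : SimpleGraph V₂} {u₁ : V₁} {u₂ : V₂}

@[simp]
theorem joinAtLeaves_adj_inl_inl {x y : V₁} :
    (joinAtLeaves T₁ T₂ u₁ u₂).Adj (Sum.inl x) (Sum.inl y) ↔ T₁.Adj x y := by
  simp only [joinAtLeaves, SimpleGraph.fromRel_adj]
  aesop (add simp SimpleGraph.adj_comm)

@[simp]
theorem joinAtLeaves_adj_inr_inr {x y : V₂} :
    (joinAtLeaves T₁ T₂ u₁ u₂).Adj (Sum.inr x) (Sum.inr y) ↔ T₂.Adj x y := by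
  simp only [joinAtLeaves, SimpleGraph.fromRel_adj]
  aesop (add simp SimpleGraph.adj_comm)

@[simp]
theorem joinAtLeaves_adj_inl_inr {x : V₁} {y : V₂} :
    (joinAtLeaves T₁ T₂ u₁ u₂).Adj (Sum.inl x) (Sum.inr y) ↔ x = u₁ ∧ y = u₂ := by
  simp [joinAtLeaves]

@[simp]
theorem joinAtLeaves_adj_inr_inl {x : V₂} {y : V₁} :
    (joinAtLeaves T₁ T₂ u₁ u₂).Adj (Sum.inr x) (Sum.inl y) ↔ x = u₂ ∧ y = u₁ := by
  rw [SimpleGraph.adj_comm, joinAtLeaves_adj_inl_inr, and_comm]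

theorem joinAtLeaves_adj_inl_of_ne {x : V₁} (hx : x ≠ u₁) {b : V₁ ⊕ V₂} :
    (joinAtLeaves T₁ T₂ u₁ u₂).Adj (Sum.inl x) b ↔ ∃ y, b = Sum.inl y ∧ T₁.Adj x y := by
  cases b <;> simp [hx]

theorem joinAtLeaves_adj_inr_of_ne {x : V₂} (hx : x ≠ u₂) {b : V₁ ⊕ V₂} :
    (joinAtLeaves T₁ T₂ u₁ u₂).Adj (Sum.inr x) b ↔ ∃ y, b = Sum.inr y ∧ T₂.Adj x y := by
  cases b <;> simp [hx]

variable {D : Finset (V₁ ⊕ V₂)} {v₁ w₁ : V₁} {v₂ w₂ : V₂}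

theorem IsTotalDominatingSet.toLeft_of_joinAtLeaves
    (hD : IsTotalDominatingSet (joinAtLeaves T₁ T₂ u₁ u₂) D) (hu₁ : T₁.Adj u₁ v₁)
    (hw₁ : w₁ ≠ u₁) (hw₁leaf : ∀ x, T₁.Adj w₁ x → x = v₁) :
    IsTotalDominatingSet T₁ D.toLeft := by
  have hv₁ : Sum.inl v₁ ∈ D := hD.mem_of_forall_adj_eq (u := Sum.inl w₁) fun b hb => by
    obtain ⟨y, rfl, hy⟩ := (joinAtLeaves_adj_inl_of_ne hw₁).1 hb
    rw [hw₁leaf y hy]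
  intro v
  by_cases hv : v = u₁
  · exact ⟨v₁, Finset.mem_toLeft.2 hv₁, hv ▸ hu₁⟩
  · obtain ⟨b, hb, hvb⟩ := hD (Sum.inl v)
    obtain ⟨y, rfl, hy⟩ := (joinAtLeaves_adj_inl_of_ne hv).1 hvb
    exact ⟨y, Finset.mem_toLeft.2 hb, hy⟩

theorem IsTotalDominatingSet.toRight_of_joinAtLeaves
    (hD : IsTotalDominatingSet (joinAtLeaves T₁ T₂ u₁ u₂) D) (hu₂ : T₂.Adj u₂ v₂)
    (hw₂ : w₂ ≠ u₂) (hw₂leaf : ∀ x, T₂.Adj w₂ x → x = v₂) :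
    IsTotalDominatingSet T₂ D.toRight := by
  have hv₂ : Sum.inr v₂ ∈ D := hD.mem_of_forall_adj_eq (u := Sum.inr w₂) fun b hb => by
    obtain ⟨y, rfl, hy⟩ := (joinAtLeaves_adj_inr_of_ne hw₂).1 hb
    rw [hw₂leaf y hy]
  intro v
  by_cases hv : v = u₂
  · exact ⟨v₂, Finset.mem_toRight.2 hv₂, hv ▸ hu₂⟩
  · obtain ⟨b, hb, hvb⟩ := hD (Sum.inr v)
    obtain ⟨y, rfl, hy⟩ := (joinAtLeaves_adj_inr_of_ne hv).1 hvb
    exact ⟨y, Finset.mem_toRight.2 hb, hy⟩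

theorem isTotalDominatingSet_joinAtLeaves_of_toLeft_of_toRight
    (h₁ : IsTotalDominatingSet T₁ D.toLeft) (h₂ : IsTotalDominatingSet T₂ D.toRight) :
    IsTotalDominatingSet (joinAtLeaves T₁ T₂ u₁ u₂) D := by
  rintro (v | v)
  · obtain ⟨w, hw, hvw⟩ := h₁ v
    exact ⟨Sum.inl w, Finset.mem_toLeft.1 hw, joinAtLeaves_adj_inl_inl.2 hvw⟩
  · obtain ⟨w, hw, hvw⟩ := h₂ v
    exact ⟨Sum.inr w, Finset.mem_toRight.1 hw, joinAtLeaves_adj_inr_inr.2 hvw⟩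

theorem totalDominationSplits_joinAtLeaves (hu₁ : T₁.Adj u₁ v₁) (hw₁ : w₁ ≠ u₁)
    (hw₁leaf : ∀ x, T₁.Adj w₁ x → x = v₁) (hu₂ : T₂.Adj u₂ v₂) (hw₂ : w₂ ≠ u₂)
    (hw₂leaf : ∀ x, T₂.Adj w₂ x → x = v₂) :
    TotalDominationSplits (joinAtLeaves T₁ T₂ u₁ u₂) T₁ T₂ := fun _ =>
  ⟨fun hD => ⟨hD.toLeft_of_joinAtLeaves hu₁ hw₁ hw₁leaf,
      hD.toRight_of_joinAtLeaves hu₂ hw₂ hw₂leaf⟩,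
    fun h => isTotalDominatingSet_joinAtLeaves_of_toLeft_of_toRight h.1 h.2⟩

end JoinAtLeaves

theorem joinAtLeaves_totalDomination_general {V₁ V₂ : Type*} [Fintype V₁] [Fintype V₂]
    (T₁ : SimpleGraph V₁) (T₂ : SimpleGraph V₂)
    (hT₁ : T₁.IsTree) (hT₂ : T₂.IsTree)
    (hcard₁ : 2 ≤ Fintype.card V₁) (hcard₂ : 2 ≤ Fintype.card V₂)
    (u₁ v₁ : V₁) (u₂ v₂ : V₂)
    (hu₁ : T₁.Adj u₁ v₁)
    (hv₁ : ∃ u', u' ≠ u₁ ∧ T₁.Adj v₁ u' ∧ ∀ x, T₁.Adj u' x → x = v₁)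
    (hu₂ : T₂.Adj u₂ v₂)
    (hv₂ : ∃ u', u' ≠ u₂ ∧ T₂.Adj v₂ u' ∧ ∀ x, T₂.Adj u' x → x = v₂) :
    totalDominationNumber (joinAtLeaves T₁ T₂ u₁ u₂)
        = totalDominationNumber T₁ + totalDominationNumber T₂ ∧
    numMinTotalDomSets (joinAtLeaves T₁ T₂ u₁ u₂)
        = numMinTotalDomSets T₁ * numMinTotalDomSets T₂ ∧
    ∀ D : Finset (V₁ ⊕ V₂),
      IsTotalDominatingSet (joinAtLeaves T₁ T₂ u₁ u₂) D ↔
        (IsTotalDominatingSet T₁ D.toLeft ∧ IsTotalDominatingSet T₂ D.toRight) := by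
  obtain ⟨w₁, hw₁, -, hw₁leaf⟩ := hv₁
  obtain ⟨w₂, hw₂, -, hw₂leaf⟩ := hv₂
  have hsplit := totalDominationSplits_joinAtLeaves hu₁ hw₁ hw₁leaf hu₂ hw₂ hw₂leaf
  have : Nontrivial V₁ := Fintype.one_lt_card_iff_nontrivial.1 hcard₁
  have : Nontrivial V₂ := Fintype.one_lt_card_iff_nontrivial.1 hcard₂
  have h₁ : ∃ D, IsTotalDominatingSet T₁ D :=
    ⟨_, hT₁.connected.preconnected.isTotalDominatingSet_univ⟩
  have h₂ : ∃ D, IsTotalDominatingSet T₂ D :=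
    ⟨_, hT₂.connected.preconnected.isTotalDominatingSet_univ⟩
  exact ⟨hsplit.totalDominationNumber_eq h₁ h₂, hsplit.numMinTotalDomSets_eq h₁ h₂, hsplit⟩

/-- If `u₁` is a leaf of the tree `T₁` whose unique neighbour `v₁` is adjacent to another
leaf of `T₁`, and similarly `u₂`, `v₂` in `T₂`, then the tree `T` obtained by joining `T₁`
and `T₂` by the edge `u₁u₂` satisfies `γₜ(T) = γₜ(T₁) + γₜ(T₂)`,
`Γₜ(T) = Γₜ(T₁)·Γₜ(T₂)`, and a set `D` is a total dominating set of `T` iff its traces on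
`T₁` and `T₂` are total dominating sets. -/
theorem joinAtLeaves_totalDomination {V₁ V₂ : Type*} [Fintype V₁] [Fintype V₂]
    [DecidableEq V₁] [DecidableEq V₂]
    (T₁ : SimpleGraph V₁) (T₂ : SimpleGraph V₂)
    (hT₁ : T₁.IsTree) (hT₂ : T₂.IsTree)
    (hcard₁ : 2 ≤ Fintype.card V₁) (hcard₂ : 2 ≤ Fintype.card V₂)
    (u₁ v₁ : V₁) (u₂ v₂ : V₂)
    (hu₁ : T₁.Adj u₁ v₁) (hu₁leaf : ∀ x, T₁.Adj u₁ x → x = v₁)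
    (hv₁ : ∃ u', u' ≠ u₁ ∧ T₁.Adj v₁ u' ∧ ∀ x, T₁.Adj u' x → x = v₁)
    (hu₂ : T₂.Adj u₂ v₂) (hu₂leaf : ∀ x, T₂.Adj u₂ x → x = v₂)
    (hv₂ : ∃ u', u' ≠ u₂ ∧ T₂.Adj v₂ u' ∧ ∀ x, T₂.Adj u' x → x = v₂) :
    totalDominationNumber (joinAtLeaves T₁ T₂ u₁ u₂)
        = totalDominationNumber T₁ + totalDominationNumber T₂ ∧
    numMinTotalDomSets (joinAtLeaves T₁ T₂ u₁ u₂)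
        = numMinTotalDomSets T₁ * numMinTotalDomSets T₂ ∧
    ∀ D : Finset (V₁ ⊕ V₂),
      IsTotalDominatingSet (joinAtLeaves T₁ T₂ u₁ u₂) D ↔
        (IsTotalDominatingSet T₁ D.toLeft ∧ IsTotalDominatingSet T₂ D.toRight) :=
  joinAtLeaves_totalDomination_general T₁ T₂ hT₁ hT₂ hcard₁ hcard₂ u₁ v₁ u₂ v₂ hu₁ hv₁ hu₂ hv₂
end
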